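/- The interval transportation problem is strongly feasible (every scenario has a nonempty feasible set) if and only if ∑_i s̲_i ≥ ∑_j d̄_j. -/

import Mathlib

open Finset

def Feas {m n : ℕ} (s : Fin m → ℝ) (d : Fin n → ℝ) (x : Fin m → Fin n → ℝ) : Prop :=
  (∀ i j, 0 ≤ x i j) ∧ (∀ i, ∑ j, x i j ≤ s i) ∧ (∀ j, ∑ i, x i j = d j)

def IsOptimal {m n : ℕ} (c : Fin m → Fin n → ℝ) (s : Fin m → ℝ) (d : Fin n → ℝ)
    (x : Fin m → Fin n → ℝ) : Prop :=
  Feas s d x ∧ ∀ x', Feas s d x' → ∑ i, ∑ j, c i j * x i j ≤ ∑ i, ∑ j, c i j * x' i j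

/-! Necessity: the extreme scenario `(s̲, d̄)` must be feasible, and summing a feasible plan over
both indices gives `∑ d ≤ ∑ s`. Sufficiency: every scenario has `∑ d ≤ ∑ d̄ ≤ ∑ s̲ ≤ ∑ s`, and for
nonnegative data with `∑ d ≤ ∑ s` the proportional plan `x i j = s i / (∑ s) * d j` is feasible. -/

variable {m n : ℕ}

theorem Feas.sum_le {s : Fin m → ℝ} {d : Fin n → ℝ} {x : Fin m → Fin n → ℝ}
    (hx : Feas s d x) : ∑ j, d j ≤ ∑ i, s i :=
  calc ∑ j, d j = ∑ j, ∑ i, x i j := by simp only [hx.2.2]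
    _ = ∑ i, ∑ j, x i j := sum_comm
    _ ≤ ∑ i, s i := sum_le_sum fun i _ => hx.2.1 i

noncomputable def proportionalPlan (s : Fin m → ℝ) (d : Fin n → ℝ) (i : Fin m) (j : Fin n) : ℝ :=
  s i / (∑ k, s k) * d j

theorem feas_proportionalPlan {s : Fin m → ℝ} {d : Fin n → ℝ} (hs : 0 ≤ s) (hd : 0 ≤ d)
    (h : ∑ j, d j ≤ ∑ i, s i) : Feas s d (proportionalPlan s d) := by
  have hT : 0 ≤ ∑ k, s k := sum_nonneg fun k _ => hs k
  refine ⟨fun i j => mul_nonneg (div_nonneg (hs i) hT) (hd j), fun i => ?_, fun j => ?_⟩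
  · calc ∑ j, proportionalPlan s d i j = s i * ((∑ j, d j) / ∑ k, s k) := by
          simp only [proportionalPlan, ← mul_sum]; ring
      _ ≤ s i * 1 := mul_le_mul_of_nonneg_left (div_le_one_of_le₀ h hT) (hs i)
      _ = s i := mul_one _
  · have hcol : ∑ i, proportionalPlan s d i j = (∑ k, s k) / (∑ k, s k) * d j := by
      simp only [proportionalPlan, ← sum_mul, sum_div]
    rw [hcol]
    rcases hT.eq_or_lt with hT0 | hTpos
    · -- with no supply there is no demand either, so the junk value `0 / 0 = 0` is harmless
      have hdj : d j = 0 :=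
        le_antisymm ((single_le_sum (fun k _ => hd k) (mem_univ j)).trans (hT0 ▸ h)) (hd j)
      simp [hdj]
    · rw [div_self hTpos.ne', one_mul]

theorem exists_feas_iff_sum_le {s : Fin m → ℝ} {d : Fin n → ℝ} (hs : 0 ≤ s) (hd : 0 ≤ d) :
    (∃ x, Feas s d x) ↔ ∑ j, d j ≤ ∑ i, s i :=
  ⟨fun ⟨_, hx⟩ => hx.sum_le, fun h => ⟨_, feas_proportionalPlan hs hd h⟩⟩

theorem stmt_4 {m n : ℕ} (slo shi : Fin m → ℝ) (dlo dhi : Fin n → ℝ)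
    (hs0 : 0 ≤ slo) (hs : slo ≤ shi) (hd0 : 0 ≤ dlo) (hd : dlo ≤ dhi) :
    (∀ s d, slo ≤ s → s ≤ shi → dlo ≤ d → d ≤ dhi → ∃ x, Feas s d x) ↔
      ∑ j, dhi j ≤ ∑ i, slo i := by
  constructor
  · intro h
    exact (exists_feas_iff_sum_le hs0 (hd0.trans hd)).1 (h slo dhi le_rfl hs hd le_rfl)
  · intro h s d hslo _ hdlo hdhi
    refine (exists_feas_iff_sum_le (hs0.trans hslo) (hd0.trans hdlo)).2 ?_
    calc ∑ j, d j ≤ ∑ j, dhi j := sum_le_sum fun j _ => hdhi j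
      _ ≤ ∑ i, slo i := h
      _ ≤ ∑ i, s i := sum_le_sum fun i _ => hslo i
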